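/- The independence complex of the path graph L_n (with n+1 vertices and n edges) is contractible if n = 3k, and homotopy equivalent to the sphere S^k if n = 3k+1 or n = 3k+2. -/

import Mathlib

/-!
If every neighbour of a vertex `u` is also a neighbour of another vertex `w`, deleting `w` does
not change the homotopy type of the independence complex: moving the weight of `w` onto `u` is a
homotopy inverse of the inclusion, through straight-line homotopies inside simplices. In the path
`0 - 1 - ⋯ - n` this deletes `2, 5, 8, …` one after the other (with `u = 0, 3, 6, …`), leaving the
vertices `≢ 2 (mod 3)`. For `n = 3k` the vertex `3k` is then isolated, so the complex is a cone.
Otherwise what is left is a perfect matching on the `k + 1` edges `{3i, 3i+1}`, whose independence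
complex is the boundary of the cross-polytope in `ℝ^(k+1)`; the differences of the weights at the
ends of each edge, normalised, identify it with `S^k`.
-/

open scoped unitInterval

/-- The defining relation for the topological join of two spaces. -/
inductive JoinRel (X Y : Type*) :
    (X × Y × I) ⊕ (X ⊕ Y) → (X × Y × I) ⊕ (X ⊕ Y) → Prop
  | zero (x : X) (y : Y) : JoinRel X Y (.inl (x, y, 0)) (.inr (.inl x))
  | one (x : X) (y : Y) : JoinRel X Y (.inl (x, y, 1)) (.inr (.inr y))

/-- The topological join `X * Y`. -/
def TopJoin (X Y : Type*) [TopologicalSpace X] [TopologicalSpace Y] : Type _ :=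
  Quot (JoinRel X Y)

instance (X Y : Type*) [TopologicalSpace X] [TopologicalSpace Y] :
    TopologicalSpace (TopJoin X Y) := by
  unfold TopJoin; infer_instance

/-- The inclusion of the first factor into the join. -/
def TopJoin.inl {X Y : Type*} [TopologicalSpace X] [TopologicalSpace Y] (x : X) :
    TopJoin X Y :=
  Quot.mk _ (.inr (.inl x))

/-- The (unreduced) suspension, as the join with a two-point space. -/
def Susp (X : Type*) [TopologicalSpace X] : Type _ := TopJoin X Bool

instance (X : Type*) [TopologicalSpace X] : TopologicalSpace (Susp X) :=
  inferInstanceAs (TopologicalSpace (TopJoin X Bool))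

/-- The north pole of the suspension. -/
def suspApex (X : Type*) [TopologicalSpace X] : Susp X :=
  Quot.mk _ (.inr (.inr true))

/-- The wedge (one-point union) of two pointed spaces. -/
def Wedge (X Y : Type*) [TopologicalSpace X] [TopologicalSpace Y] (x0 : X) (y0 : Y) :
    Type _ :=
  Quot (fun a b : X ⊕ Y => a = Sum.inl x0 ∧ b = Sum.inr y0)

instance (X Y : Type*) [TopologicalSpace X] [TopologicalSpace Y] (x0 : X) (y0 : Y) :
    TopologicalSpace (Wedge X Y x0 y0) := by
  unfold Wedge; infer_instance

/-- The wedge of a family of pointed spaces. -/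
def WedgeFam {ι : Type*} (X : ι → Type*) [∀ i, TopologicalSpace (X i)]
    (pt : ∀ i, X i) : Type _ :=
  Quot (fun a b : Σ i, X i => ∃ i j, a = ⟨i, pt i⟩ ∧ b = ⟨j, pt j⟩)

instance {ι : Type*} (X : ι → Type*) [∀ i, TopologicalSpace (X i)] (pt : ∀ i, X i) :
    TopologicalSpace (WedgeFam X pt) := by
  unfold WedgeFam; infer_instance

/-- The `k`-dimensional sphere. -/
abbrev nSphere (k : ℕ) : Type :=
  ↥(Metric.sphere (0 : EuclideanSpace ℝ (Fin (k + 1))) 1)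

/-- A base point on the `k`-sphere. -/
noncomputable def sphereBase (k : ℕ) : nSphere k :=
  ⟨EuclideanSpace.single 0 1, by
    simp [EuclideanSpace.norm_single]⟩

/-- An abstract simplicial complex on a vertex set `V`. -/
structure AbsSimplicialComplex (V : Type*) where
  faces : Set (Finset V)
  down_closed : ∀ ⦃s⦄, s ∈ faces → ∀ ⦃t : Finset V⦄, t ⊆ s → t ∈ faces

/-- The geometric realization of an abstract simplicial complex, as the space of
convex-combination weight functions supported on a face. -/
def AbsSimplicialComplex.space {V : Type*} (K : AbsSimplicialComplex V) : Type _ :=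
  {f : V → ℝ // (∀ x, 0 ≤ f x) ∧
    ∃ s ∈ K.faces, (∀ x, x ∉ s → f x = 0) ∧ ∑ x ∈ s, f x = 1}

instance {V : Type*} (K : AbsSimplicialComplex V) : TopologicalSpace K.space := by
  unfold AbsSimplicialComplex.space; infer_instance

/-- The independence complex of a graph, restricted to vertices in `A`:
faces are the independent sets of `G` contained in `A`. -/
def indepComplexOn {V : Type*} (G : SimpleGraph V) (A : Set V) :
    AbsSimplicialComplex V where
  faces := {s | ↑s ⊆ A ∧ ∀ a ∈ s, ∀ b ∈ s, ¬ G.Adj a b}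
  down_closed := by
    intro s hs t ht
    exact ⟨fun x hx => hs.1 (ht hx), fun a ha b hb => hs.2 a (ht ha) b (ht hb)⟩

/-- The independence complex of a graph. -/
def indepComplex {V : Type*} (G : SimpleGraph V) : AbsSimplicialComplex V :=
  indepComplexOn G Set.univ

/-- The closed star of a vertex: the vertex together with its neighbors. -/
def stSet {V : Type*} (G : SimpleGraph V) (v : V) : Set V :=
  insert v (G.neighborSet v)

lemma indepComplexOn_mono {V : Type*} (G : SimpleGraph V) {A B : Set V} (h : A ⊆ B) :
    (indepComplexOn G A).faces ⊆ (indepComplexOn G B).faces :=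
  fun _ hs => ⟨fun x hx => h (hs.1 hx), hs.2⟩

/-- The inclusion of the realization of a subcomplex. -/
def inclMap {V : Type*} (K L : AbsSimplicialComplex V) (h : K.faces ⊆ L.faces) :
    C(K.space, L.space) where
  toFun := fun f => ⟨f.1, f.2.1, by
    obtain ⟨s, hs, h2⟩ := f.2.2
    exact ⟨s, h hs, h2⟩⟩
  continuous_toFun := Continuous.subtype_mk continuous_subtype_val _
/-- The cone over `K` with apex `v`, inside the same vertex set. -/
def coneAt {V : Type*} [DecidableEq V] (v : V) (K : AbsSimplicialComplex V) :
    AbsSimplicialComplex V where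
  faces := {s | s.erase v ∈ K.faces}
  down_closed := by
    intro s hs t ht
    exact K.down_closed hs (Finset.erase_subset_erase _ ht)

/-- The cone over `K` with a fresh apex vertex `none`. -/
def coneVertex {V : Type*} (K : AbsSimplicialComplex V) :
    AbsSimplicialComplex (Option V) where
  faces := {s | Finset.eraseNone s ∈ K.faces}
  down_closed := by
    intro s hs t ht
    refine K.down_closed hs ?_
    intro x hx
    rw [Finset.mem_eraseNone] at hx ⊢
    exact ht hx

/-- The join of two simplicial complexes on disjoint vertex sets. -/
def complexJoin {V W : Type*} (K : AbsSimplicialComplex V)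
    (L : AbsSimplicialComplex W) : AbsSimplicialComplex (V ⊕ W) where
  faces := {s | s.toLeft ∈ K.faces ∧ s.toRight ∈ L.faces}
  down_closed := by
    intro s hs t ht
    constructor
    · refine K.down_closed hs.1 ?_
      intro x hx; rw [Finset.mem_toLeft] at hx ⊢; exact ht hx
    · refine L.down_closed hs.2 ?_
      intro x hx; rw [Finset.mem_toRight] at hx ⊢; exact ht hx

/-- The disjoint union of two graphs. -/
def graphSum {V W : Type*} (G : SimpleGraph V) (H : SimpleGraph W) :
    SimpleGraph (V ⊕ W) where
  Adj a b :=
    match a, b with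
    | .inl x, .inl y => G.Adj x y
    | .inr x, .inr y => H.Adj x y
    | _, _ => False
  symm := ⟨by rintro (x | x) (y | y) h; exacts [G.adj_symm h, h.elim, h.elim, H.adj_symm h]⟩
  loopless := ⟨by rintro (x | x) h; exacts [G.irrefl h, H.irrefl h]⟩

/-- The subcomplex `A_u = I_{G - st(u)} * u` of the independence complex:
simplices `σ` with `σ ∪ {u}` independent. -/
def Afan {V : Type*} [DecidableEq V] (G : SimpleGraph V) (u : V) :
    AbsSimplicialComplex V where
  faces := {s | ∀ a ∈ insert u s, ∀ b ∈ insert u s, ¬ G.Adj a b}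
  down_closed := by
    intro s hs t ht a ha b hb
    exact hs a (Finset.insert_subset_insert u ht ha) b (Finset.insert_subset_insert u ht hb)

/-- The join of a complex with the full simplex on the vertex set `s`. -/
def joinSimplex {V : Type*} [DecidableEq V] (s : Finset V)
    (K : AbsSimplicialComplex V) : AbsSimplicialComplex V where
  faces := {t | t \ s ∈ K.faces}
  down_closed := by
    intro t ht r hr
    exact K.down_closed ht (Finset.sdiff_subset_sdiff hr (subset_refl s))

/-- The complex `K(G, v)` of Theorem 6.4: independent sets of `G - st(v)`
missing `W_u = lk(u) - v` entirely, for at least one neighbor `u` of `v`. -/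
def Kcomplex {V : Type*} (G : SimpleGraph V) (v : V) : AbsSimplicialComplex V where
  faces := {s | s ∈ (indepComplexOn G (stSet G v)ᶜ).faces ∧
      ∃ u, G.Adj v u ∧ ∀ w ∈ s, ¬ (G.Adj u w ∧ w ≠ v)}
  down_closed := by
    intro s hs t ht
    refine ⟨(indepComplexOn G (stSet G v)ᶜ).down_closed hs.1 ht, ?_⟩
    obtain ⟨u, hu, hw⟩ := hs.2
    exact ⟨u, hu, fun w hwt => hw w (ht hwt)⟩

/-- Auxiliary relation for subdividing the edge `uv` into a path of four edges
through three new vertices `0, 1, 2`. -/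
def sRel {V : Type*} (G : SimpleGraph V) (u v : V) :
    V ⊕ Fin 3 → V ⊕ Fin 3 → Prop
  | .inl x, .inl y => G.Adj x y ∧ ¬((x = u ∧ y = v) ∨ (x = v ∧ y = u))
  | .inl x, .inr i => (x = u ∧ i = 0) ∨ (x = v ∧ i = 2)
  | .inr i, .inr j => (i : ℕ) + 1 = (j : ℕ)
  | .inr _, .inl _ => False

/-- The graph obtained from `G` by replacing the edge `uv` by the path
`u - 0 - 1 - 2 - v` of four edges. -/
def subdivide4 {V : Type*} (G : SimpleGraph V) (u v : V) :
    SimpleGraph (V ⊕ Fin 3) where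
  Adj a b := sRel G u v a b ∨ sRel G u v b a
  symm := ⟨fun _ _ (h : _ ∨ _) => h.symm⟩
  loopless := ⟨by
    rintro (x | i) h
    · rcases h with h | h <;> exact G.irrefl h.1
    · rcases h with h | h <;> (simp only [sRel] at h; omega)⟩

lemma stSet_compl_subset {V : Type*} (G : SimpleGraph V) (v : V) :
    (stSet G v)ᶜ ⊆ ({v} : Set V)ᶜ :=
  Set.compl_subset_compl.mpr fun x hx => by
    rw [Set.mem_singleton_iff] at hx
    rw [hx]
    exact Set.mem_insert v _

/-- The inclusion of the realization of `I_{G - st(v)}` into that of `I_{G - v}`. -/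
def linkIncl {V : Type*} (G : SimpleGraph V) (v : V) :
    C((indepComplexOn G (stSet G v)ᶜ).space, (indepComplexOn G ({v} : Set V)ᶜ).space) :=
  inclMap _ _ (indepComplexOn_mono G (stSet_compl_subset G v))

open Finset
open scoped ContinuousMap

namespace AbsSimplicialComplex

variable {V : Type*} {K : AbsSimplicialComplex V}

@[fun_prop]
theorem continuous_apply_space (K : AbsSimplicialComplex V) (v : V) :
    Continuous fun p : K.space => p.1 v :=
  (continuous_apply v).comp continuous_subtype_val

theorem sum_eq_one_of_vanish (p : K.space) {s : Finset V} (hs : ∀ v ∉ s, p.1 v = 0) :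
    ∑ v ∈ s, p.1 v = 1 := by
  classical
  obtain ⟨-, t, -, ht, hsum⟩ := p.2
  calc ∑ v ∈ s, p.1 v = ∑ v ∈ s ∪ t, p.1 v :=
        sum_subset subset_union_left fun v _ hv => hs v hv
    _ = ∑ v ∈ t, p.1 v := (sum_subset subset_union_right fun v _ hv => ht v hv).symm
    _ = 1 := hsum

theorem homotopic_of_exists_face {X : Type*} [TopologicalSpace X] (f g : C(X, K.space))
    (h : ∀ x, ∃ s ∈ K.faces, ∀ v ∉ s, (f x).1 v = 0 ∧ (g x).1 v = 0) : f.Homotopic g := by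
  refine ⟨⟨⟨fun tx => ⟨fun v => (1 - tx.1) * (f tx.2).1 v + tx.1 * (g tx.2).1 v, ?_⟩, ?_⟩,
    fun x => ?_, fun x => ?_⟩⟩
  · obtain ⟨t, x⟩ := tx
    obtain ⟨s, hs, hvan⟩ := h x
    refine ⟨fun v => add_nonneg (mul_nonneg (unitInterval.one_minus_nonneg t) ((f x).2.1 v))
      (mul_nonneg t.2.1 ((g x).2.1 v)), s, hs, fun v hv => by simp [(hvan v hv).1, (hvan v hv).2],
      ?_⟩
    rw [sum_add_distrib, ← mul_sum, ← mul_sum, sum_eq_one_of_vanish (f x) fun v hv => (hvan v hv).1,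
      sum_eq_one_of_vanish (g x) fun v hv => (hvan v hv).2]
    ring
  · refine Continuous.subtype_mk (continuous_pi fun v => ?_) _
    have hf : Continuous fun x => (f x).1 v := (continuous_apply_space K v).comp f.continuous
    have hg : Continuous fun x => (g x).1 v := (continuous_apply_space K v).comp g.continuous
    fun_prop
  · exact Subtype.ext (funext fun v => by simp)
  · exact Subtype.ext (funext fun v => by simp)

end AbsSimplicialComplex

open AbsSimplicialComplex

section IndepComplex

variable {V : Type*} {G : SimpleGraph V} {A : Set V}

theorem indepComplexOn_apply_eq_zero_of_notMem (p : (indepComplexOn G A).space) {v : V}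
    (hv : v ∉ A) : p.1 v = 0 := by
  obtain ⟨-, s, hs, hvan, -⟩ := p.2
  exact hvan v fun hvs => hv (hs.1 hvs)

theorem indepComplexOn_apply_eq_zero_or_of_adj (p : (indepComplexOn G A).space) {v w : V}
    (h : G.Adj v w) : p.1 v = 0 ∨ p.1 w = 0 := by
  obtain ⟨-, s, hs, hvan, -⟩ := p.2
  by_contra! hvw
  exact hs.2 v (not_imp_comm.1 (hvan v) hvw.1) w (not_imp_comm.1 (hvan w) hvw.2) h

theorem insert_mem_indepComplexOn_faces [DecidableEq V] {s : Finset V} {u : V}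
    (hs : s ∈ (indepComplexOn G A).faces) (hu : u ∈ A) (hus : ∀ x ∈ s, ¬ G.Adj u x) :
    insert u s ∈ (indepComplexOn G A).faces := by
  refine ⟨by simpa [Set.insert_subset_iff] using ⟨hu, hs.1⟩, ?_⟩
  simp only [mem_insert, forall_eq_or_imp, G.irrefl, not_false_eq_true, true_and]
  exact ⟨hus, fun a ha => ⟨fun hau => hus a ha hau.symm, hs.2 a ha⟩⟩

theorem erase_mem_indepComplexOn_diff_faces [DecidableEq V] {s : Finset V} (w : V)
    (hs : s ∈ (indepComplexOn G A).faces) :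
    s.erase w ∈ (indepComplexOn G (A \ {w})).faces :=
  ⟨fun _ hx => ⟨hs.1 (mem_of_mem_erase hx), ne_of_mem_erase hx⟩,
    fun a ha b hb => hs.2 a (mem_of_mem_erase ha) b (mem_of_mem_erase hb)⟩

theorem contractibleSpace_indepComplexOn_of_isolated {v : V} (hv : v ∈ A)
    (hiso : ∀ x ∈ A, ¬ G.Adj v x) : ContractibleSpace (indepComplexOn G A).space := by
  classical
  let δ : (indepComplexOn G A).space := ⟨Pi.single v 1, fun x => by
    by_cases hx : x = v <;> simp [hx], {v}, ⟨by simpa using hv, by simp⟩,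
    fun x hx => by simp_all, by simp⟩
  rw [contractible_iff_id_nullhomotopic]
  refine ⟨δ, homotopic_of_exists_face _ _ fun p => ?_⟩
  obtain ⟨-, s, hs, hvan, -⟩ := p.2
  refine ⟨insert v s, insert_mem_indepComplexOn_faces hs hv fun x hx => hiso x (hs.1 hx),
    fun x hx => ⟨hvan x fun h => hx (mem_insert_of_mem h), ?_⟩⟩
  rw [mem_insert, not_or] at hx
  exact Pi.single_eq_of_ne hx.1 _

end IndepComplex

section Fold

variable {V : Type*} [DecidableEq V] {G : SimpleGraph V} {A : Set V} {u w : V}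

def moveMass (u w : V) (f : V → ℝ) : V → ℝ :=
  fun x => if x = w then 0 else if x = u then f u + f w else f x

theorem moveMass_of_eq_zero {f : V → ℝ} (hw : f w = 0) : moveMass u w f = f := by
  funext x
  unfold moveMass
  split_ifs with hxw hxu
  · rw [hxw, hw]
  · rw [hxu, hw, add_zero]
  · rfl

theorem moveMass_nonneg {f : V → ℝ} (hf : ∀ x, 0 ≤ f x) (x : V) : 0 ≤ moveMass u w f x := by
  unfold moveMass
  split_ifs
  exacts [le_rfl, add_nonneg (hf u) (hf w), hf x]

theorem sum_moveMass (huw : u ≠ w) (f : V → ℝ) {t : Finset V} (hu : u ∈ t) (hw : w ∈ t) :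
    ∑ x ∈ t, moveMass u w f x = ∑ x ∈ t, f x := by
  have hu' : u ∈ t.erase w := mem_erase.2 ⟨huw, hu⟩
  rw [← add_sum_erase t _ hw, ← add_sum_erase t _ hw, ← add_sum_erase _ _ hu',
    ← add_sum_erase _ _ hu', sum_congr rfl fun x hx => ?_]
  · simp [moveMass, huw]
    ring
  · simp [moveMass, ne_of_mem_erase hx, ne_of_mem_erase (mem_of_mem_erase hx)]

theorem exists_face_moveMass (hu : u ∈ A) (huw : u ≠ w)
    (hN : G.neighborSet u ∩ A ⊆ G.neighborSet w) (p : (indepComplexOn G A).space) :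
    ∃ t ∈ (indepComplexOn G A).faces, (∀ v ∉ t, p.1 v = 0) ∧
      (∀ v ∉ t.erase w, moveMass u w p.1 v = 0) ∧ ∑ v ∈ t.erase w, moveMass u w p.1 v = 1 := by
  obtain ⟨-, s, hs, hvan, -⟩ := p.2
  by_cases hw : p.1 w = 0
  · have hvan' : ∀ v ∉ s.erase w, p.1 v = 0 := fun v hv => by
      by_cases hvw : v = w
      · rwa [hvw]
      · exact hvan v fun h => hv (mem_erase.2 ⟨hvw, h⟩)
    rw [moveMass_of_eq_zero hw]
    exact ⟨s, hs, hvan, hvan', sum_eq_one_of_vanish p hvan'⟩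
  have hws : w ∈ s := not_imp_comm.1 (hvan w) hw
  -- `w` lies in the face, so `u` can join it: a neighbour of `u` in it would also neighbour `w`
  have hus : ∀ x ∈ s, ¬ G.Adj u x := fun x hx hux => hs.2 w hws x hx (hN ⟨hux, hs.1 hx⟩)
  have hvan_ins : ∀ v ∉ insert u s, p.1 v = 0 :=
    fun v hv => hvan v fun h => hv (mem_insert_of_mem h)
  refine ⟨insert u s, insert_mem_indepComplexOn_faces hs hu hus, hvan_ins, fun v hv => ?_, ?_⟩
  · by_cases hvw : v = w
    · simp [moveMass, hvw]
    · have hv' : v ∉ insert u s := fun h => hv (mem_erase.2 ⟨hvw, h⟩)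
      simp [moveMass, hvw, (not_or.1 (mem_insert.not.1 hv')).1, hvan_ins v hv']
  · rw [sum_erase _ (by simp [moveMass]), sum_moveMass huw _ (mem_insert_self u s)
      (mem_insert_of_mem hws)]
    exact sum_eq_one_of_vanish p hvan_ins

def moveMassMap (hu : u ∈ A) (huw : u ≠ w) (hN : G.neighborSet u ∩ A ⊆ G.neighborSet w) :
    C((indepComplexOn G A).space, (indepComplexOn G (A \ {w})).space) where
  toFun p := ⟨moveMass u w p.1, moveMass_nonneg p.2.1, by
    obtain ⟨t, ht, -, hvan, hsum⟩ := exists_face_moveMass hu huw hN p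
    exact ⟨t.erase w, erase_mem_indepComplexOn_diff_faces w ht, hvan, hsum⟩⟩
  continuous_toFun := by
    refine Continuous.subtype_mk (continuous_pi fun x => ?_) _
    unfold moveMass
    split_ifs <;> fun_prop

theorem nonempty_homotopyEquiv_indepComplexOn_diff (hu : u ∈ A) (huw : u ≠ w)
    (hN : G.neighborSet u ∩ A ⊆ G.neighborSet w) :
    Nonempty ((indepComplexOn G A).space ≃ₕ (indepComplexOn G (A \ {w})).space) := by
  refine ⟨⟨moveMassMap hu huw hN, inclMap _ _ (indepComplexOn_mono G Set.sdiff_subset), ?_, ?_⟩⟩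
  · refine homotopic_of_exists_face _ _ fun p => ?_
    obtain ⟨t, ht, hvan, hvan', -⟩ := exists_face_moveMass hu huw hN p
    exact ⟨t, ht, fun v hv => ⟨hvan' v fun h => hv (mem_of_mem_erase h), hvan v hv⟩⟩
  · convert ContinuousMap.Homotopic.refl _
    refine ContinuousMap.ext fun p => Subtype.ext ?_
    exact (moveMass_of_eq_zero (indepComplexOn_apply_eq_zero_of_notMem p fun h => h.2 rfl)).symm

end Fold

section CrossPolytope

variable {ι V : Type*} {G : SimpleGraph V} {e : ι × Bool → V}

-- `|y i|`, put on the end `(i, true)` or `(i, false)` of the `i`-th edge according to its sign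
def crossCoord (y : EuclideanSpace ℝ ι) (a : ι × Bool) : ℝ :=
  if a.2 then (y a.1)⁺ else (y a.1)⁻

theorem crossCoord_nonneg (y : EuclideanSpace ℝ ι) (a : ι × Bool) : 0 ≤ crossCoord y a := by
  unfold crossCoord
  split_ifs
  exacts [posPart_nonneg _, negPart_nonneg _]

theorem continuous_crossCoord (a : ι × Bool) :
    Continuous fun y : EuclideanSpace ℝ ι => crossCoord y a := by
  unfold crossCoord
  split_ifs <;> fun_prop

theorem crossCoord_smul {c : ℝ} (hc : 0 ≤ c) (y : EuclideanSpace ℝ ι) :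
    crossCoord (c • y) = c • crossCoord y := by
  funext ⟨i, b⟩
  cases b <;> simp [crossCoord, posPart_def, negPart_def, mul_max_of_nonneg _ _ hc]

theorem crossCoord_true_eq_zero_or (y : EuclideanSpace ℝ ι) (i : ι) :
    crossCoord y (i, true) = 0 ∨ crossCoord y (i, false) = 0 := by
  rcases le_total (y i) 0 with h | h
  · exact Or.inl (by simpa [crossCoord] using h)
  · exact Or.inr (by simpa [crossCoord] using h)

def diffVec (e : ι × Bool → V) (p : (indepComplexOn G (Set.range e)).space) :
    EuclideanSpace ℝ ι :=
  WithLp.toLp 2 fun i => p.1 (e (i, true)) - p.1 (e (i, false))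

theorem continuous_diffVec : Continuous (diffVec (G := G) e) :=
  (PiLp.continuous_toLp 2 _).comp (continuous_pi fun i => by fun_prop)

theorem crossCoord_diffVec (hmatch : ∀ i, G.Adj (e (i, true)) (e (i, false)))
    (p : (indepComplexOn G (Set.range e)).space) :
    crossCoord (diffVec e p) = fun a => p.1 (e a) := by
  funext ⟨i, b⟩
  have h₁ := p.2.1 (e (i, true))
  have h₂ := p.2.1 (e (i, false))
  rcases indepComplexOn_apply_eq_zero_or_of_adj p (hmatch i) with h | h <;>
    cases b <;> simp [crossCoord, diffVec, h, h₁, h₂]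

variable [Fintype ι]

theorem sum_crossCoord (y : EuclideanSpace ℝ ι) : ∑ a, crossCoord y a = ∑ i, |y i| := by
  simp [Fintype.sum_prod_type, crossCoord, posPart_add_negPart]

theorem sum_crossCoord_pos {y : EuclideanSpace ℝ ι} (hy : y ≠ 0) : 0 < ∑ a, crossCoord y a := by
  obtain ⟨i, hi⟩ : ∃ i, y i ≠ 0 := by
    by_contra! h
    exact hy (PiLp.ext h)
  rw [sum_crossCoord]
  exact sum_pos' (fun j _ => abs_nonneg _) ⟨i, mem_univ i, abs_pos.2 hi⟩

theorem sum_apply_comp_eq_one (he : e.Injective) (p : (indepComplexOn G (Set.range e)).space) :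
    ∑ a, p.1 (e a) = 1 := by
  have h := sum_eq_one_of_vanish p (s := univ.map ⟨e, he⟩) fun v hv =>
    indepComplexOn_apply_eq_zero_of_notMem p (by simpa using hv)
  rwa [sum_map] at h

theorem diffVec_ne_zero (he : e.Injective) (hmatch : ∀ i, G.Adj (e (i, true)) (e (i, false)))
    (p : (indepComplexOn G (Set.range e)).space) : diffVec e p ≠ 0 := by
  intro h
  have hsum : ∑ a, crossCoord (diffVec e p) a = 1 := by
    simp only [crossCoord_diffVec hmatch]
    exact sum_apply_comp_eq_one he p
  simp [h, crossCoord] at hsum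

noncomputable def crossPoint (e : ι × Bool → V) (y : EuclideanSpace ℝ ι) : V → ℝ :=
  fun v => Function.extend e (crossCoord y) 0 v / ∑ a, crossCoord y a

theorem crossPoint_apply (he : e.Injective) (y : EuclideanSpace ℝ ι) (a : ι × Bool) :
    crossPoint e y (e a) = crossCoord y a / ∑ b, crossCoord y b := by
  rw [crossPoint, he.extend_apply]

theorem crossPoint_of_notMem_range (y : EuclideanSpace ℝ ι) {v : V} (hv : v ∉ Set.range e) :
    crossPoint e y v = 0 := by
  rw [crossPoint, Function.extend_apply' _ _ _ hv, Pi.zero_apply, zero_div]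

theorem crossPoint_mem (he : e.Injective) (hadj : ∀ a b, G.Adj (e a) (e b) → a.1 = b.1)
    {y : EuclideanSpace ℝ ι} (hy : y ≠ 0) :
    (∀ v, 0 ≤ crossPoint e y v) ∧ ∃ s ∈ (indepComplexOn G (Set.range e)).faces,
      (∀ v ∉ s, crossPoint e y v = 0) ∧ ∑ v ∈ s, crossPoint e y v = 1 := by
  classical
  have hL := sum_crossCoord_pos hy
  refine ⟨fun v => ?_, (univ.filter fun a => crossCoord y a ≠ 0).map ⟨e, he⟩, ⟨?_, ?_⟩,
    fun v hv => ?_, ?_⟩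
  · by_cases hv : v ∈ Set.range e
    · obtain ⟨a, rfl⟩ := hv
      rw [crossPoint_apply he]
      exact div_nonneg (crossCoord_nonneg y a) hL.le
    · rw [crossPoint_of_notMem_range y hv]
  · intro v hv
    simp only [coe_map, Function.Embedding.coeFn_mk, Set.mem_image] at hv
    obtain ⟨a, -, rfl⟩ := hv
    exact Set.mem_range_self a
  · simp only [mem_map, mem_filter, mem_univ, true_and, Function.Embedding.coeFn_mk]
    rintro _ ⟨⟨i, b⟩, ha, rfl⟩ _ ⟨⟨j, c⟩, hb, rfl⟩ hab
    obtain rfl : i = j := hadj _ _ hab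
    have hbc : b ≠ c := fun hbc => G.irrefl (by rwa [hbc] at hab)
    rcases crossCoord_true_eq_zero_or y i with h | h <;> cases b <;> cases c <;> simp_all
  · by_cases hv' : v ∈ Set.range e
    · obtain ⟨a, rfl⟩ := hv'
      have ha : crossCoord y a = 0 := by simpa using hv
      rw [crossPoint_apply he, ha, zero_div]
    · exact crossPoint_of_notMem_range y hv'
  · rw [sum_map]
    simp only [Function.Embedding.coeFn_mk, crossPoint_apply he]
    rw [← sum_div, sum_filter_ne_zero, div_self hL.ne']

theorem continuous_crossPoint (he : e.Injective) (v : V) :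
    Continuous fun y : Metric.sphere (0 : EuclideanSpace ℝ ι) 1 => crossPoint e y.1 v := by
  refine Continuous.div ?_ (continuous_finsetSum _ fun a _ =>
    (continuous_crossCoord a).comp continuous_subtype_val) fun y => (sum_crossCoord_pos
      (ne_zero_of_mem_unit_sphere y)).ne'
  by_cases hv : ∃ a, e a = v
  · obtain ⟨a, rfl⟩ := hv
    simp only [he.extend_apply]
    exact (continuous_crossCoord a).comp continuous_subtype_val
  · simp only [Function.extend_apply' _ _ _ hv]
    exact continuous_const

theorem crossPoint_smul_diffVec (he : e.Injective)
    (hmatch : ∀ i, G.Adj (e (i, true)) (e (i, false))) (p : (indepComplexOn G (Set.range e)).space)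
    {c : ℝ} (hc : 0 < c) : crossPoint e (c • diffVec e p) = p.1 := by
  have hcross : crossCoord (c • diffVec e p) = fun a => c * p.1 (e a) := by
    rw [crossCoord_smul hc.le, crossCoord_diffVec hmatch]
    rfl
  funext v
  by_cases hv : v ∈ Set.range e
  · obtain ⟨a, rfl⟩ := hv
    rw [crossPoint_apply he, hcross, ← mul_sum, sum_apply_comp_eq_one he, mul_one,
      mul_div_cancel_left₀ _ hc.ne']
  · rw [crossPoint_of_notMem_range _ hv, indepComplexOn_apply_eq_zero_of_notMem p hv]

theorem inv_norm_smul_diffVec_of_eq_crossPoint (he : e.Injective) {y : EuclideanSpace ℝ ι}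
    (hy : ‖y‖ = 1) {p : (indepComplexOn G (Set.range e)).space} (hp : p.1 = crossPoint e y) :
    ‖diffVec e p‖⁻¹ • diffVec e p = y := by
  have hL := sum_crossCoord_pos (y := y) fun h => by simp [h] at hy
  have hdiff : diffVec e p = (∑ a, crossCoord y a)⁻¹ • y := by
    ext i
    simp only [diffVec, hp, PiLp.smul_apply, smul_eq_mul, crossPoint_apply he, crossCoord,
      ite_true, Bool.false_eq_true, ite_false, div_eq_inv_mul]
    rw [← mul_sub, posPart_sub_negPart]
  rw [hdiff, norm_smul, norm_inv, Real.norm_of_nonneg hL.le, hy, mul_one, inv_inv, smul_smul,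
    mul_inv_cancel₀ hL.ne', one_smul]

noncomputable def homeomorphSphereOfMatching (he : e.Injective)
    (hadj : ∀ a b, G.Adj (e a) (e b) ↔ a.1 = b.1 ∧ a.2 ≠ b.2) :
    (indepComplexOn G (Set.range e)).space ≃ₜ Metric.sphere (0 : EuclideanSpace ℝ ι) 1 :=
  have hmatch : ∀ i, G.Adj (e (i, true)) (e (i, false)) := fun i => (hadj _ _).2 ⟨rfl, nofun⟩
  { toFun p := ⟨‖diffVec e p‖⁻¹ • diffVec e p, by
      rw [mem_sphere_zero_iff_norm]
      exact norm_smul_inv_norm (diffVec_ne_zero he hmatch p)⟩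
    invFun y := ⟨crossPoint e y.1, crossPoint_mem he (fun a b h => ((hadj a b).1 h).1)
      (ne_zero_of_mem_unit_sphere y)⟩
    left_inv p := Subtype.ext <| crossPoint_smul_diffVec he hmatch p <|
      inv_pos.2 (norm_pos_iff.2 (diffVec_ne_zero he hmatch p))
    right_inv y := Subtype.ext <| inv_norm_smul_diffVec_of_eq_crossPoint he
      (norm_eq_of_mem_sphere y) rfl
    continuous_toFun := by
      have hc : Continuous (diffVec (G := G) e) := continuous_diffVec
      exact Continuous.subtype_mk (((continuous_norm.comp hc).inv₀
        fun p => norm_ne_zero_iff.2 (diffVec_ne_zero he hmatch p)).smul hc) _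
    continuous_invFun := Continuous.subtype_mk (continuous_pi (continuous_crossPoint he)) _ }

end CrossPolytope

section PathGraph

open SimpleGraph

def pathFoldedVertices (N j : ℕ) : Set (Fin N) := {m | (m : ℕ) % 3 = 2 → 3 * j ≤ m}

theorem pathFoldedVertices_zero (N : ℕ) : pathFoldedVertices N 0 = Set.univ := by
  ext m
  simp [pathFoldedVertices]

theorem pathFoldedVertices_diff {N j : ℕ} (h : 3 * j + 2 < N) :
    pathFoldedVertices N j \ {⟨3 * j + 2, h⟩} = pathFoldedVertices N (j + 1) := by
  ext m
  simp only [pathFoldedVertices, Set.mem_sdiff, Set.mem_ofPred_eq, Set.mem_singleton_iff,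
    Fin.ext_iff]
  omega

theorem nonempty_homotopyEquiv_pathFolded {N j : ℕ} (hj : 3 * j ≤ N) :
    Nonempty ((indepComplex (pathGraph N)).space ≃ₕ
      (indepComplexOn (pathGraph N) (pathFoldedVertices N j)).space) := by
  induction j with
  | zero => rw [pathFoldedVertices_zero]; exact ⟨.refl _⟩
  | succ j ih =>
    obtain ⟨f⟩ := ih (by omega)
    -- `3 * j - 1` is already gone, so the only neighbour of `3 * j` left is `3 * j + 1`
    obtain ⟨g⟩ := nonempty_homotopyEquiv_indepComplexOn_diff (G := pathGraph N)
      (A := pathFoldedVertices N j)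
      (u := ⟨3 * j, by omega⟩) (w := ⟨3 * j + 2, by omega⟩)
      (by simp [pathFoldedVertices]) (by simp [Fin.ext_iff])
      (by
        rintro x ⟨hx, hxA⟩
        simp only [mem_neighborSet, pathGraph_adj, pathFoldedVertices, Set.mem_ofPred_eq]
          at hx hxA ⊢
        omega)
    rw [pathFoldedVertices_diff (by omega)] at g
    exact ⟨f.trans g⟩

theorem contractibleSpace_indepComplex_pathGraph (k : ℕ) :
    ContractibleSpace (indepComplex (pathGraph (3 * k + 1))).space := by
  obtain ⟨f⟩ := nonempty_homotopyEquiv_pathFolded (N := 3 * k + 1) (j := k) (by omega)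
  have := contractibleSpace_indepComplexOn_of_isolated (G := pathGraph (3 * k + 1))
    (A := pathFoldedVertices (3 * k + 1) k) (v := ⟨3 * k, by omega⟩)
    (by simp [pathFoldedVertices]) fun x hx hadj => by
      simp only [pathGraph_adj, pathFoldedVertices, Set.mem_ofPred_eq] at hx hadj
      omega
  exact f.contractibleSpace

def pathMatching {N k : ℕ} (h : 3 * k + 2 ≤ N) (a : Fin (k + 1) × Bool) : Fin N :=
  ⟨3 * a.1 + a.2.toNat, by have := a.1.isLt; cases a.2 <;> simp <;> omega⟩

theorem pathMatching_injective {N k : ℕ} (h : 3 * k + 2 ≤ N) :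
    (pathMatching h).Injective := by
  rintro ⟨i, b⟩ ⟨j, c⟩ hij
  simp only [pathMatching, Fin.ext_iff] at hij
  cases b <;> cases c <;> simp at hij ⊢ <;> omega

theorem pathGraph_adj_pathMatching {N k : ℕ} (h : 3 * k + 2 ≤ N) (a b : Fin (k + 1) × Bool) :
    (pathGraph N).Adj (pathMatching h a) (pathMatching h b) ↔ a.1 = b.1 ∧ a.2 ≠ b.2 := by
  rcases a with ⟨i, s⟩
  rcases b with ⟨j, t⟩
  simp only [pathGraph_adj, pathMatching, Fin.ext_iff]
  cases s <;> cases t <;> simp <;> omega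

theorem range_pathMatching {N k : ℕ} (h₁ : 3 * k + 2 ≤ N) (h₂ : N ≤ 3 * k + 3) :
    Set.range (pathMatching h₁) = pathFoldedVertices N (N / 3) := by
  ext m
  simp only [Set.mem_range, pathFoldedVertices, Set.mem_ofPred_eq, pathMatching, Fin.ext_iff,
    Prod.exists]
  constructor
  · rintro ⟨i, b, hm⟩
    cases b <;> simp at hm <;> omega
  · intro hm
    refine ⟨⟨(m : ℕ) / 3, by omega⟩, decide ((m : ℕ) % 3 = 1), ?_⟩
    by_cases h : (m : ℕ) % 3 = 1 <;> simp [h] <;> omega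

theorem nonempty_homotopyEquiv_indepComplex_pathGraph_sphere {N k : ℕ} (h₁ : 3 * k + 2 ≤ N)
    (h₂ : N ≤ 3 * k + 3) : Nonempty ((indepComplex (pathGraph N)).space ≃ₕ nSphere k) := by
  obtain ⟨f⟩ := nonempty_homotopyEquiv_pathFolded (N := N) (j := N / 3) (by omega)
  rw [← range_pathMatching h₁ h₂] at f
  exact ⟨f.trans (homeomorphSphereOfMatching (pathMatching_injective h₁)
    (pathGraph_adj_pathMatching h₁)).toHomotopyEquiv⟩

end PathGraph

/-- The independence complex of the path `L_n` (on `n+1` vertices) is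
contractible if `n = 3k`, and homotopy equivalent to `S^k` if `n = 3k+1` or `n = 3k+2`. -/
theorem indep_path (k : ℕ) :
    ContractibleSpace (indepComplex (SimpleGraph.pathGraph (3 * k + 1))).space ∧
    Nonempty (ContinuousMap.HomotopyEquiv
      (indepComplex (SimpleGraph.pathGraph (3 * k + 2))).space (nSphere k)) ∧
    Nonempty (ContinuousMap.HomotopyEquiv
      (indepComplex (SimpleGraph.pathGraph (3 * k + 3))).space (nSphere k)) :=
  ⟨contractibleSpace_indepComplex_pathGraph k,
    nonempty_homotopyEquiv_indepComplex_pathGraph_sphere (by omega) (by omega),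
    nonempty_homotopyEquiv_indepComplex_pathGraph_sphere (by omega) (by omega)⟩
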